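/- arXiv:1410.8744 — 4 statements merged into one kernel-verified Lean document; each statement's English description precedes it below -/
import Mathlib

section
/- Minkowski decomposition of lattice points: let λ be a marking with λ_a = 0 for some a and define ω_b = min(λ_b, 1). Then the set of lattice points S_C(λ) of the marked chain polytope equals the Minkowski sum S_C(λ − ω) + S_C(ω). -/
/-!
Write `s ∈ S_C(λ)` as `(s - u) + u`, where `u` is the indicator of the set
`U = bottomSupport A λ s` of unmarked `x` with `s x ≥ 1` such that every chain
`a ≺ p₁ ≺ … ≺ pₖ ≺ x` from the marked set has `λ_a = 0` and `s = 0` on all `pᵢ`. A marked chain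
meets `U` at most once, and only if it runs from `λ_a = 0` to `λ_b ≥ 1`; hence `u ∈ S_C(ω)`.
For `s - u` the only critical chains run from `λ_a = 0` to `λ_b ≥ 1` and avoid `U`. The first
point `x` of such a chain with `s x ≠ 0` is not in `U`, so some chain `a' ≺ p' ≺ x` already has
`λ_{a'} + ∑_{p'} s ≥ 1`. Splicing it in front of `x` bounds the sum of `s` along the original
chain by `λ_b - 1`.
-/

open Pointwise

variable {α : Type*}

/-- A chain `a ≺ x₁ ≺ … ≺ xₙ ≺ b` with `a, b ∈ A`, all `xᵢ ∉ A`, `n ≥ 1`. -/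
def MChain [PartialOrder α] (A : Set α) (a b : α) (l : List α) : Prop :=
  a ∈ A ∧ b ∈ A ∧ l ≠ [] ∧ (∀ x ∈ l, x ∉ A) ∧ List.Chain' (· < ·) (a :: (l ++ [b]))

/-- The marked chain polytope, realized as the subset of `α → ℝ` of functions vanishing
on the marked set `A` (i.e. `ℝ^{P∖A}`). -/
def markedChainPolytope [PartialOrder α] (A : Set α) (lam : α → ℤ) : Set (α → ℝ) :=
  { s | (∀ x ∈ A, s x = 0) ∧ (∀ x, x ∉ A → 0 ≤ s x) ∧
    ∀ a b l, MChain A a b l → (l.map s).sum ≤ (lam b : ℝ) - (lam a : ℝ) }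

/-- The marked order polytope, realized as the subset of `α → ℝ` of functions agreeing
with the marking on `A` (i.e. `ℝ^{P∖A}`). -/
def markedOrderPolytope [PartialOrder α] (A : Set α) (lam : α → ℤ) : Set (α → ℝ) :=
  { s | (∀ x ∈ A, s x = (lam x : ℝ)) ∧
    (∀ x y, x ∉ A → y ∉ A → x < y → s x ≤ s y) ∧
    (∀ a ∈ A, ∀ x, x ∉ A → a < x → (lam a : ℝ) ≤ s x) ∧
    (∀ b ∈ A, ∀ x, x ∉ A → x < b → s x ≤ (lam b : ℝ)) }

/-- `λ ∈ Q_A`: a nonnegative integer marking, weakly increasing along `≺` on `A`. -/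
def IsMarking [PartialOrder α] (A : Set α) (lam : α → ℤ) : Prop :=
  (∀ a ∈ A, 0 ≤ lam a) ∧ ∀ a ∈ A, ∀ b ∈ A, a < b → lam a ≤ lam b

/-- `A` contains all minimal and all maximal elements of the poset. -/
def ContainsExtremals [PartialOrder α] (A : Set α) : Prop :=
  (∀ x : α, IsMin x → x ∈ A) ∧ (∀ x : α, IsMax x → x ∈ A)

/-- `S_C(λ)`: the lattice points of the marked chain polytope. -/
def markedChainLattice [PartialOrder α] (A : Set α) (lam : α → ℤ) : Set (α → ℝ) :=
  { s ∈ markedChainPolytope A lam | ∀ x, ∃ n : ℤ, s x = (n : ℝ) }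

/-- The reduced poset of `(P, A, λ)`. -/
def reducedPoset [PartialOrder α] (A : Set α) (lam : α → ℤ) : Set α :=
  { x | ¬ ∃ a ∈ A, lam a = 0 ∧ x ≤ a }

/-- Cover relation within the full subposet `R`. -/
def CoversIn [PartialOrder α] (R : Set α) (x y : α) : Prop :=
  x ∈ R ∧ y ∈ R ∧ x < y ∧ ¬ ∃ z ∈ R, x < z ∧ z < y

/-- The Hasse diagram of the subposet `R` is connected. -/
def HasseConnected [PartialOrder α] (R : Set α) : Prop :=
  ∀ x ∈ R, ∀ y ∈ R,
    Relation.ReflTransGen (fun u v => CoversIn R u v ∨ CoversIn R v u) x y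

/-- `λ` is `C`-indecomposable. -/
def CIndecomposable [PartialOrder α] (A : Set α) (lam : α → ℤ) : Prop :=
  ∀ mu tau : α → ℤ, IsMarking A mu → IsMarking A tau →
    markedChainLattice A lam = markedChainLattice A mu + markedChainLattice A tau →
    (∀ a ∈ A, mu a = 0) ∨ (∀ a ∈ A, tau a = 0)

-- `S_C(λ)` in integer coordinates.
structure IsChainLatticePoint [PartialOrder α] (A : Set α) (lam s : α → ℤ) : Prop where
  eq_zero : ∀ x ∈ A, s x = 0
  nonneg : ∀ x ∉ A, 0 ≤ s x
  sum_le : ∀ a b l, MChain A a b l → (l.map s).sum ≤ lam b - lam a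

theorem sum_map_indicator_eq_zero {U : Set α} {l : List α} (hl : ∀ y ∈ l, y ∉ U) :
    (l.map (U.indicator (1 : α → ℤ))).sum = 0 :=
  List.sum_eq_zero (by simpa using fun y hy => Set.indicator_of_notMem (hl y hy) (1 : α → ℤ))

section

variable [PartialOrder α]

theorem markedChainLattice_eq_image (A : Set α) (lam : α → ℤ) :
    markedChainLattice A lam =
      (Int.castAddHom ℝ).compLeft α '' {s | IsChainLatticePoint A lam s} := by
  have sum_cast (s : α → ℤ) (l : List α) :
      (l.map fun x => (s x : ℝ)).sum = (l.map s).sum := by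
    simp [Int.cast_list_sum, List.map_map, Function.comp_def]
  ext t
  constructor
  · rintro ⟨⟨h0, hnonneg, hsum⟩, hint⟩
    choose s hs using hint
    obtain rfl : t = fun x => (s x : ℝ) := funext hs
    simp only at h0 hnonneg
    refine ⟨s, ⟨fun x hx => ?_, fun x hx => ?_, fun a b l hl => ?_⟩, rfl⟩
    · exact_mod_cast h0 x hx
    · exact_mod_cast hnonneg x hx
    · exact_mod_cast sum_cast s l ▸ hsum a b l hl
  · rintro ⟨s, ⟨h0, hnonneg, hsum⟩, rfl⟩
    refine ⟨⟨fun x hx => ?_, fun x hx => ?_, fun a b l hl => ?_⟩, fun x => ⟨s x, rfl⟩⟩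
    · simp [h0 x hx]
    · simpa using hnonneg x hx
    · show (l.map fun x => (s x : ℝ)).sum ≤ _
      rw [sum_cast]
      exact_mod_cast hsum a b l hl

def MChainPrefix (A : Set α) (a : α) (p : List α) (x : α) : Prop :=
  a ∈ A ∧ (∀ z ∈ p, z ∉ A) ∧ List.IsChain (· < ·) (a :: (p ++ [x]))

variable {A : Set α} {a b x : α} {l p q : List α}

theorem MChain.isChain (h : MChain A a b l) : List.IsChain (· < ·) (a :: (l ++ [b])) :=
  h.2.2.2.2

theorem MChain.prefix_of_eq_append (h : MChain A a b (p ++ x :: q)) : MChainPrefix A a p x := by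
  have hc : List.IsChain (· < ·) (a :: (p ++ x :: (q ++ [b]))) := by simpa using h.isChain
  obtain ⟨ha, -, -, hl, -⟩ := h
  exact ⟨ha, fun z hz => hl z (by simp [hz]), (List.isChain_cons_split.1 hc).1⟩

theorem MChain.splice {a' : α} {p' : List α} (h' : MChainPrefix A a' p' x)
    (h : MChain A a b (p ++ x :: q)) : MChain A a' b (p' ++ x :: q) := by
  obtain ⟨ha', hp', hc'⟩ := h'
  have hc : List.IsChain (· < ·) (a :: (p ++ x :: (q ++ [b]))) := by simpa using h.isChain
  obtain ⟨-, hb, -, hl, -⟩ := h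
  refine ⟨ha', hb, by simp, fun z hz => ?_, ?_⟩
  · simp only [List.mem_append, List.mem_cons] at hz
    rcases hz with hz | rfl | hz
    exacts [hp' z hz, hl z (by simp), hl z (by simp [hz])]
  · show List.IsChain _ _
    simpa using List.isChain_cons_split.2 ⟨hc', (List.isChain_cons_split.1 hc).2⟩

namespace IsChainLatticePoint

variable {lam mu s t : α → ℤ}

theorem add (hs : IsChainLatticePoint A lam s) (ht : IsChainLatticePoint A mu t) :
    IsChainLatticePoint A (lam + mu) (s + t) where
  eq_zero x hx := by simp [hs.eq_zero x hx, ht.eq_zero x hx]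
  nonneg x hx := add_nonneg (hs.nonneg x hx) (ht.nonneg x hx)
  sum_le a b l hl := by
    have := hs.sum_le a b l hl
    have := ht.sum_le a b l hl
    simp only [Pi.add_apply, Pi.add_def, List.sum_map_add]
    linarith

variable (hs : IsChainLatticePoint A lam s)
include hs

theorem sum_nonneg (hl : ∀ y ∈ l, y ∉ A) : 0 ≤ (l.map s).sum :=
  List.sum_nonneg (by simpa using fun y hy => hs.nonneg y (hl y hy))

theorem le_sum (hl : ∀ y ∈ l, y ∉ A) (hx : x ∈ l) : s x ≤ (l.map s).sum :=
  List.single_le_sum (by simpa using fun y hy => hs.nonneg y (hl y hy)) _ (List.mem_map_of_mem hx)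

theorem le_of_mchain (h : MChain A a b l) : lam a ≤ lam b := by
  have := hs.sum_le a b l h
  have := hs.sum_nonneg h.2.2.2.1
  omega

end IsChainLatticePoint

def bottomSupport (A : Set α) (lam s : α → ℤ) : Set α :=
  {x | x ∉ A ∧ 1 ≤ s x ∧ ∀ a p, MChainPrefix A a p x → lam a + (p.map s).sum ≤ 0}

theorem notMem_bottomSupport_of_mem {lam s : α → ℤ} (hx : x ∈ A) : x ∉ bottomSupport A lam s :=
  fun hxU => hxU.1 hx

namespace IsChainLatticePoint

variable {lam s : α → ℤ} (hs : IsChainLatticePoint A lam s)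
include hs

theorem sum_le_sub_one (h : MChain A a b l) (hl : ∀ y ∈ l, y ∉ bottomSupport A lam s)
    (hb : 1 ≤ lam b) : (l.map s).sum ≤ lam b - 1 := by
  rcases hfind : l.find? (fun y => s y ≠ 0) with _ | x
  · have hzero : ∀ y ∈ l, s y = 0 := by simpa using hfind
    rw [List.sum_eq_zero (by simpa using hzero)]
    omega
  · obtain ⟨hx, p, q, rfl, hp⟩ := List.find?_eq_some_iff_append.1 hfind
    have hxA : x ∉ A := h.2.2.2.1 x (by simp)
    have hx1 : 1 ≤ s x := by
      have hx : s x ≠ 0 := by simpa using hx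
      have := hs.nonneg x hxA
      omega
    obtain ⟨a', p', hprefix, hpos⟩ :
        ∃ a' p', MChainPrefix A a' p' x ∧ 0 < lam a' + (p'.map s).sum := by
      by_contra! hall
      exact hl x (by simp) ⟨hxA, hx1, hall⟩
    have hsplice := hs.sum_le a' b _ (h.splice hprefix)
    have hp0 : (p.map s).sum = 0 := List.sum_eq_zero (by simpa using hp)
    simp only [List.map_append, List.map_cons, List.sum_append, List.sum_cons] at hsplice ⊢
    omega

variable (hlam : ∀ a ∈ A, 0 ≤ lam a)
include hlam

theorem eq_zero_of_mem_bottomSupport (h : MChain A a b (p ++ x :: q))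
    (hx : x ∈ bottomSupport A lam s) : lam a = 0 ∧ (p.map s).sum = 0 := by
  have hprefix := h.prefix_of_eq_append
  have := hx.2.2 a p hprefix
  have := hlam a hprefix.1
  have := hs.sum_nonneg hprefix.2.1
  omega

theorem notMem_bottomSupport_of_mem_right (h : MChain A a b (p ++ x :: q))
    (hx : x ∈ bottomSupport A lam s) {z : α} (hz : z ∈ q) : z ∉ bottomSupport A lam s := by
  intro hzU
  obtain ⟨q₁, q₂, rfl⟩ := List.append_of_mem hz
  have h' : MChain A a b ((p ++ x :: q₁) ++ z :: q₂) := by simpa using h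
  have := (hs.eq_zero_of_mem_bottomSupport hlam h' hzU).2
  have := hs.le_sum h'.prefix_of_eq_append.2.1 (x := x) (by simp)
  have := hx.2.1
  omega

theorem mchain_bottomSupport_cases (h : MChain A a b l) :
    (∀ y ∈ l, y ∉ bottomSupport A lam s) ∨
      ((l.map ((bottomSupport A lam s).indicator (1 : α → ℤ))).sum = 1 ∧
        lam a = 0 ∧ 1 ≤ lam b) := by
  refine or_iff_not_imp_left.2 fun hU => ?_
  simp only [not_forall, not_not] at hU
  obtain ⟨x, hxl, hx⟩ := hU
  obtain ⟨p, q, rfl⟩ := List.append_of_mem hxl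
  obtain ⟨ha, hp0⟩ := hs.eq_zero_of_mem_bottomSupport hlam h hx
  have hp : ∀ y ∈ p, y ∉ bottomSupport A lam s := fun y hy hyU => by
    have := hs.le_sum h.prefix_of_eq_append.2.1 hy
    have := hyU.2.1
    omega
  have hq : ∀ z ∈ q, z ∉ bottomSupport A lam s :=
    fun z hz => hs.notMem_bottomSupport_of_mem_right hlam h hx hz
  have hb : 1 ≤ lam b := by
    have := hs.sum_le a b _ h
    have := hs.le_sum h.2.2.2.1 hxl
    have := hx.2.1
    omega
  refine ⟨?_, ha, hb⟩
  rw [List.map_append, List.map_cons, List.sum_append, List.sum_cons,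
    sum_map_indicator_eq_zero hp, sum_map_indicator_eq_zero hq, Set.indicator_of_mem hx]
  rfl

theorem indicator_bottomSupport :
    IsChainLatticePoint A (fun x => min (lam x) 1) ((bottomSupport A lam s).indicator 1) where
  eq_zero x hx := Set.indicator_of_notMem (notMem_bottomSupport_of_mem hx) _
  nonneg x _ := Set.indicator_nonneg (fun _ _ => zero_le_one) x
  sum_le a b l h := by
    have := hs.le_of_mchain h
    rcases hs.mchain_bottomSupport_cases hlam h with hl | ⟨hsum, ha, hb⟩
    · rw [sum_map_indicator_eq_zero hl]
      omega
    · rw [hsum]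
      omega

theorem sub_indicator_bottomSupport :
    IsChainLatticePoint A (fun x => lam x - min (lam x) 1)
      (s - (bottomSupport A lam s).indicator 1) where
  eq_zero x hx := by
    simp [hs.eq_zero x hx, Set.indicator_of_notMem (notMem_bottomSupport_of_mem hx)]
  nonneg x hx := by
    by_cases hxU : x ∈ bottomSupport A lam s
    · simpa [Set.indicator_of_mem hxU] using hxU.2.1
    · simpa [Set.indicator_of_notMem hxU] using hs.nonneg x hx
  sum_le a b l h := by
    set u : α → ℤ := (bottomSupport A lam s).indicator 1
    have hsplit : (l.map (s - u)).sum + (l.map u).sum = (l.map s).sum := by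
      rw [← List.sum_map_add]
      simp
    have := hs.sum_le a b l h
    have := hlam a h.1
    rcases hs.mchain_bottomSupport_cases hlam h with hl | ⟨hsum, -, -⟩
    · have : (l.map u).sum = 0 := sum_map_indicator_eq_zero hl
      by_cases hb : 1 ≤ lam b
      · have := hs.sum_le_sub_one h hl hb
        omega
      · omega
    · have : (l.map u).sum = 1 := hsum
      omega

end IsChainLatticePoint

theorem setOf_isChainLatticePoint_eq_add {lam : α → ℤ} (hlam : ∀ a ∈ A, 0 ≤ lam a) :
    {s | IsChainLatticePoint A lam s} =
      {s | IsChainLatticePoint A (fun x => lam x - min (lam x) 1) s} +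
        {s | IsChainLatticePoint A (fun x => min (lam x) 1) s} := by
  refine subset_antisymm (fun s hs => ?_) ?_
  · exact ⟨_, hs.sub_indicator_bottomSupport hlam, _, hs.indicator_bottomSupport hlam,
      sub_add_cancel _ _⟩
  · rintro _ ⟨t, ht, v, hv, rfl⟩
    show IsChainLatticePoint A lam (t + v)
    convert ht.add hv using 1
    funext x
    simp

end

theorem stmt9_general [PartialOrder α] (A : Set α) (lam : α → ℤ) (hlam : IsMarking A lam) :
    markedChainLattice A lam
      = markedChainLattice A (fun x => lam x - min (lam x) 1)
        + markedChainLattice A (fun x => min (lam x) 1) := by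
  simp only [markedChainLattice_eq_image]
  rw [← Set.image_add, setOf_isChainLatticePoint_eq_add hlam.1]

theorem stmt9 [Fintype α] [PartialOrder α] (A : Set α) (lam : α → ℤ)
    (hA : ContainsExtremals A) (hlam : IsMarking A lam) (h0 : ∃ a ∈ A, lam a = 0) :
    markedChainLattice A lam
      = markedChainLattice A (fun x => lam x - min (lam x) 1)
        + markedChainLattice A (fun x => min (lam x) 1) :=
  stmt9_general A lam hlam
end

section
/- Let λ ∈ (Q_A)_0 with λ_a ∈ {0,1} for all a ∈ A, and suppose the reduced poset of (P,A,λ) splits as a disjoint union of full subposets P_1 ∪ P_2 (no comparabilities across). With λ^j as the restriction of λ to A ∩ P_j extended by zero, the lattice points satisfy S_C(λ) = S_C(λ^1) + S_C(λ^2) (Minkowski sum), hence λ is not C-indecomposable. -/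
open Pointwise

variable {α : Type*}

/-!
A point `s` of `S_C(λ)` vanishes outside the reduced poset: for `x` below a marked `b` with
`λ_b = 0`, the chain from a minimal element through `x` to `b` forces `s_x ≤ 0`. So
`s = s|P₁ + s|P₂`, and likewise `λ = λ¹ + λ²` on `A`. A marked chain meeting `P₁` is comparable
to an element of `P₁`, hence avoids `P₂`, and its inequality for `s|P₁` under `λ¹` is that for
`s` under `λ`; a chain missing `P₁` only asks `λ¹_a ≤ λ¹_b`, which holds because `λ¹` is again
a marking: nothing above an element of `P₁` lies in `P₂`, so there `λ¹` agrees with `λ`.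
The reverse inclusion holds since `S_C(μ) + S_C(τ) ⊆ S_C(μ + τ)` for all `μ, τ`.
-/

open Set

theorem Set.indicator_apply_add_indicator_apply_eq_self {M : Type*} [AddZeroClass M]
    {s t : Set α} {f : α → M} {x : α} (hst : Disjoint s t) (hx : x ∉ s ∪ t → f x = 0) :
    s.indicator f x + t.indicator f x = f x := by
  rw [← congrFun (indicator_union_of_disjoint hst f) x]
  exact indicator_apply_eq_self.2 hx

section Chains

variable [PartialOrder α] {A : Set α} {a b : α} {l : List α}

theorem MChain.pairwise (h : MChain A a b l) : (a :: (l ++ [b])).Pairwise (· < ·) :=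
  List.isChain_iff_pairwise.1 h.2.2.2.2

theorem MChain.left_lt (h : MChain A a b l) {x : α} (hx : x ∈ l) : a < x :=
  List.rel_of_pairwise_cons h.pairwise (by simp [hx])

theorem MChain.left_lt_right (h : MChain A a b l) : a < b :=
  List.rel_of_pairwise_cons h.pairwise (by simp)

theorem MChain.lt_right (h : MChain A a b l) {x : α} (hx : x ∈ l) : x < b :=
  (List.pairwise_append.1 (List.pairwise_cons.1 h.pairwise).2).2.2 x hx b (by simp)

theorem MChain.le_total (h : MChain A a b l) {x y : α} (hx : x ∈ l) (hy : y ∈ l) :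
    x ≤ y ∨ y ≤ x := by
  have hl : l.Pairwise (· < ·) := (List.pairwise_append.1 (List.pairwise_cons.1 h.pairwise).2).1
  exact List.Pairwise.forall_of_forall_of_flip (R := fun x y => x ≤ y ∨ y ≤ x)
    (fun _ _ => Or.inl le_rfl)
    (hl.imp fun h => Or.inl h.le) (hl.imp fun h => Or.inr h.le) hx hy

end Chains

section Marking

variable [PartialOrder α] {A : Set α} {lam mu tau : α → ℤ}

theorem IsMarking.eq_zero_of_notMem_reducedPoset (hlam : IsMarking A lam) {a : α} (ha : a ∈ A)
    (haR : a ∉ reducedPoset A lam) : lam a = 0 := by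
  obtain ⟨c, hc, hc0, hac⟩ := not_not.1 haR
  rcases hac.eq_or_lt with rfl | hac
  · exact hc0
  · have := hlam.1 a ha
    have := hlam.2 a ha c hc hac
    omega

theorem markedChainPolytope.eq_zero_of_notMem_reducedPoset [Finite α]
    (hA : ∀ x : α, IsMin x → x ∈ A) (hmu : ∀ a ∈ A, 0 ≤ mu a) {s : α → ℝ}
    (hs : s ∈ markedChainPolytope A mu) {x : α} (hx : x ∉ reducedPoset A mu) : s x = 0 := by
  by_cases hxA : x ∈ A
  · exact hs.1 x hxA
  obtain ⟨b, hb, hb0, hxb⟩ := not_not.1 hx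
  obtain ⟨m, hmx, hm⟩ := Finite.exists_le_minimal (p := fun _ : α => True) (a := x) trivial
  have hmA : m ∈ A := hA m (minimal_true.1 hm)
  have hmx' : m < x := hmx.lt_of_ne (by rintro rfl; exact hxA hmA)
  have hxb' : x < b := hxb.lt_of_ne (by rintro rfl; exact hxA hb)
  have hchain : MChain A m b [x] :=
    ⟨hmA, hb, List.cons_ne_nil _ _, by simpa using hxA,
      List.IsChain.cons_cons hmx' (List.isChain_pair.2 hxb')⟩
  have hle := hs.2.2 m b [x] hchain
  have hnn := hs.2.1 x hxA
  have hm0 : (0 : ℝ) ≤ mu m := by exact_mod_cast hmu m hmA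
  simp only [List.map_cons, List.map_nil, List.sum_cons, List.sum_nil, add_zero, hb0,
    Int.cast_zero] at hle
  linarith

theorem markedChainLattice_add_subset (h : ∀ a ∈ A, mu a + tau a = lam a) :
    markedChainLattice A mu + markedChainLattice A tau ⊆ markedChainLattice A lam := by
  rintro _ ⟨s, ⟨⟨hs0, hsnn, hs⟩, hsZ⟩, t, ⟨⟨ht0, htnn, ht⟩, htZ⟩, rfl⟩
  refine ⟨⟨fun x hx => by simp [hs0 x hx, ht0 x hx],
    fun x hx => add_nonneg (hsnn x hx) (htnn x hx), fun a b l hC => ?_⟩, fun x => ?_⟩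
  · have ha : (mu a : ℝ) + tau a = lam a := by exact_mod_cast h a hC.1
    have hb : (mu b : ℝ) + tau b = lam b := by exact_mod_cast h b hC.2.1
    have := hs a b l hC
    have := ht a b l hC
    rw [show l.map (s + t) = l.map (fun x => s x + t x) from rfl, List.sum_map_add]
    linarith
  · obtain ⟨m, hm⟩ := hsZ x
    obtain ⟨n, hn⟩ := htZ x
    exact ⟨m + n, by simp [hm, hn]⟩

end Marking

section Split

variable [PartialOrder α] {A P₁ P₂ : Set α} {lam : α → ℤ}

theorem IsMarking.eq_zero_of_split (hlam : IsMarking A lam)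
    (hsplit : reducedPoset A lam = P₁ ∪ P₂) {a : α} (ha : a ∈ A) (ha₁ : a ∉ P₁) (ha₂ : a ∉ P₂) :
    lam a = 0 :=
  hlam.eq_zero_of_notMem_reducedPoset ha (hsplit ▸ fun h => h.elim ha₁ ha₂)

theorem IsMarking.indicator_apply_of_split (hlam : IsMarking A lam)
    (hsplit : reducedPoset A lam = P₁ ∪ P₂) {a : α} (ha : a ∈ A) (ha₂ : a ∉ P₂) :
    (A ∩ P₁).indicator lam a = lam a :=
  indicator_apply_eq_self.2 fun ha₁ => hlam.eq_zero_of_split hsplit ha (fun h => ha₁ ⟨ha, h⟩) ha₂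

theorem IsMarking.indicator_of_split (hlam : IsMarking A lam)
    (hsplit : reducedPoset A lam = P₁ ∪ P₂)
    (hincomp : ∀ x ∈ P₁, ∀ y ∈ P₂, ¬ x ≤ y ∧ ¬ y ≤ x) :
    IsMarking A ((A ∩ P₁).indicator lam) := by
  have hnn : ∀ a, 0 ≤ (A ∩ P₁).indicator lam a := indicator_nonneg fun a ha => hlam.1 a ha.1
  refine ⟨fun a _ => hnn a, fun a ha b hb hab => ?_⟩
  by_cases ha₁ : a ∈ P₁
  · rw [hlam.indicator_apply_of_split hsplit ha fun ha₂ => (hincomp a ha₁ a ha₂).1 le_rfl,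
      hlam.indicator_apply_of_split hsplit hb fun hb₂ => (hincomp a ha₁ b hb₂).1 hab.le]
    exact hlam.2 a ha b hb hab
  · rw [indicator_of_notMem fun h => ha₁ h.2]
    exact hnn b

theorem MChain.sum_indicator_le_of_split (hlam : IsMarking A lam)
    (hsplit : reducedPoset A lam = P₁ ∪ P₂)
    (hincomp : ∀ x ∈ P₁, ∀ y ∈ P₂, ¬ x ≤ y ∧ ¬ y ≤ x)
    {s : α → ℝ} (hs : s ∈ markedChainPolytope A lam) (hs₀ : ∀ x ∉ P₁ ∪ P₂, s x = 0)
    {a b : α} {l : List α} (hC : MChain A a b l) :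
    (l.map (P₁.indicator s)).sum
      ≤ (((A ∩ P₁).indicator lam b : ℤ) : ℝ) - (((A ∩ P₁).indicator lam a : ℤ) : ℝ) := by
  by_cases hl : ∃ x₀ ∈ l, x₀ ∈ P₁
  · obtain ⟨x₀, hx₀, hx₀₁⟩ := hl
    have hl₂ : ∀ x ∈ l, x ∉ P₂ := fun x hx hx₂ =>
      (hC.le_total hx₀ hx).elim (hincomp x₀ hx₀₁ x hx₂).1 (hincomp x₀ hx₀₁ x hx₂).2
    have hmap : l.map (P₁.indicator s) = l.map s := List.map_congr_left fun x hx =>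
      indicator_apply_eq_self.2 fun hx₁ => hs₀ x fun h => h.elim hx₁ (hl₂ x hx)
    rw [hmap, hlam.indicator_apply_of_split hsplit hC.1
        fun ha₂ => (hincomp x₀ hx₀₁ a ha₂).2 (hC.left_lt hx₀).le,
      hlam.indicator_apply_of_split hsplit hC.2.1
        fun hb₂ => (hincomp x₀ hx₀₁ b hb₂).1 (hC.lt_right hx₀).le]
    exact hs.2.2 a b l hC
  · push Not at hl
    have hsum : (l.map (P₁.indicator s)).sum = 0 :=
      List.sum_eq_zero fun y hy => by
        obtain ⟨x, hx, rfl⟩ := List.mem_map.1 hy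
        exact indicator_of_notMem (hl x hx) s
    rw [hsum, sub_nonneg, Int.cast_le]
    exact (hlam.indicator_of_split hsplit hincomp).2 a hC.1 b hC.2.1 hC.left_lt_right

theorem indicator_mem_markedChainLattice_of_split [Finite α] (hA : ∀ x : α, IsMin x → x ∈ A)
    (hlam : IsMarking A lam) (hsplit : reducedPoset A lam = P₁ ∪ P₂)
    (hincomp : ∀ x ∈ P₁, ∀ y ∈ P₂, ¬ x ≤ y ∧ ¬ y ≤ x)
    {s : α → ℝ} (hs : s ∈ markedChainLattice A lam) :
    P₁.indicator s ∈ markedChainLattice A ((A ∩ P₁).indicator lam) := by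
  have hs₀ : ∀ x ∉ P₁ ∪ P₂, s x = 0 := fun x hx =>
    markedChainPolytope.eq_zero_of_notMem_reducedPoset hA hlam.1 hs.1 (hsplit ▸ hx)
  refine ⟨⟨fun x hx => by simp [hs.1.1 x hx], fun x hx => ?_,
    fun a b l hC => hC.sum_indicator_le_of_split hlam hsplit hincomp hs.1 hs₀⟩, fun x => ?_⟩
  · by_cases h : x ∈ P₁
    · simpa [indicator_of_mem h] using hs.1.2.1 x hx
    · simp [indicator_of_notMem h]
  · by_cases h : x ∈ P₁
    · simpa [indicator_of_mem h] using hs.2 x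
    · exact ⟨0, by simp [indicator_of_notMem h]⟩

end Split

theorem stmt12_general [Fintype α] [PartialOrder α] (A : Set α) (lam : α → ℤ) (P1 P2 : Set α)
    (hA : ContainsExtremals A) (hlam : IsMarking A lam)
    (hsplit : reducedPoset A lam = P1 ∪ P2)
    (hincomp : ∀ x ∈ P1, ∀ y ∈ P2, ¬ x ≤ y ∧ ¬ y ≤ x) :
    markedChainLattice A lam
      = markedChainLattice A ((A ∩ P1).indicator lam)
        + markedChainLattice A ((A ∩ P2).indicator lam) := by
  have hdisj : Disjoint P1 P2 := disjoint_left.2 fun x h₁ h₂ => (hincomp x h₁ x h₂).1 le_rfl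
  have hsplit' : reducedPoset A lam = P2 ∪ P1 := hsplit.trans (union_comm _ _)
  have hincomp' : ∀ x ∈ P2, ∀ y ∈ P1, ¬ x ≤ y ∧ ¬ y ≤ x :=
    fun x hx y hy => (hincomp y hy x hx).symm
  have hlam_add : ∀ a ∈ A, (A ∩ P1).indicator lam a + (A ∩ P2).indicator lam a = lam a :=
    fun a ha => indicator_apply_add_indicator_apply_eq_self
      (hdisj.mono inter_subset_right inter_subset_right) fun h =>
        hlam.eq_zero_of_split hsplit ha (fun h₁ => h (.inl ⟨ha, h₁⟩)) fun h₂ => h (.inr ⟨ha, h₂⟩)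
  have hs_add : ∀ s ∈ markedChainLattice A lam, P1.indicator s + P2.indicator s = s :=
    fun s hs => funext fun x => indicator_apply_add_indicator_apply_eq_self hdisj fun hx =>
      markedChainPolytope.eq_zero_of_notMem_reducedPoset hA.1 hlam.1 hs.1 (hsplit ▸ hx)
  refine Subset.antisymm (fun s hs => ⟨_, ?_, _, ?_, hs_add s hs⟩)
    (markedChainLattice_add_subset hlam_add)
  · exact indicator_mem_markedChainLattice_of_split hA.1 hlam hsplit hincomp hs
  · exact indicator_mem_markedChainLattice_of_split hA.1 hlam hsplit' hincomp' hs

theorem stmt12 [Fintype α] [PartialOrder α] (A : Set α) (lam : α → ℤ) (P1 P2 : Set α)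
    (hA : ContainsExtremals A) (hlam : IsMarking A lam) (h0 : ∃ a ∈ A, lam a = 0)
    (h01 : ∀ a ∈ A, lam a = 0 ∨ lam a = 1)
    (hsplit : reducedPoset A lam = P1 ∪ P2)
    (hdisj : Disjoint P1 P2)
    (hincomp : ∀ x ∈ P1, ∀ y ∈ P2, ¬ x ≤ y ∧ ¬ y ≤ x) :
    markedChainLattice A lam
      = markedChainLattice A ((A ∩ P1).indicator lam)
        + markedChainLattice A ((A ∩ P2).indicator lam) :=
  stmt12_general A lam P1 P2 hA hlam hsplit hincomp
end

section
/- In the proof of the Minkowski decomposition: let λ be a marking with some value 0, s ∈ S_C(λ), M = { p ∈ P\A : s_p ≠ 0 } ∪ { b ∈ A : λ_b ≠ 0 }, and t the indicator vector of the minimal elements of M intersected with P\A. Then t ∈ S_C(ω), where ω_b = min(λ_b,1). -/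
open Pointwise

variable {α : Type*}

lemma ind_sum_le_one {α : Type*} (T : Set α) (l : List α)
    (h : l.Pairwise (fun x y => ¬(x ∈ T ∧ y ∈ T))) :
    (l.map (Set.indicator T (fun _ => (1:ℝ)))).sum ≤ 1 := by
  induction l with
  | nil => simp
  | cons x l ih =>
    rw [List.map_cons, List.sum_cons]
    rcases List.pairwise_cons.mp h with ⟨hx, hl⟩
    by_cases hxT : x ∈ T
    · have hz : ∀ y ∈ l, y ∉ T := fun y hy hyT => hx y hy ⟨hxT, hyT⟩
      have hsum : (l.map (Set.indicator T fun _ => (1:ℝ))).sum = 0 :=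
        List.sum_eq_zero (by
          intro z hz'
          obtain ⟨y, hy, rfl⟩ := List.mem_map.mp hz'
          exact Set.indicator_of_notMem (hz y hy) _)
      simp [Set.indicator_of_mem hxT, hsum]
    · rw [Set.indicator_of_notMem hxT, zero_add]
      exact ih hl

theorem stmt15 [Fintype α] [PartialOrder α] (A : Set α) (lam : α → ℤ)
    (hA : ContainsExtremals A) (hlam : IsMarking A lam) (h0 : ∃ a ∈ A, lam a = 0)
    (s : α → ℝ) (hs : s ∈ markedChainLattice A lam) (M : Set α)
    (hM : M = { p | p ∉ A ∧ s p ≠ 0 } ∪ { b | b ∈ A ∧ lam b ≠ 0 }) :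
    Set.indicator { x | x ∈ M ∧ x ∉ A ∧ ∀ y ∈ M, ¬ y < x } (fun _ => (1 : ℝ))
      ∈ markedChainLattice A (fun x => min (lam x) 1) := by
  obtain ⟨⟨hsA, hsnn, hschain⟩, hsint⟩ := hs
  set T : Set α := { x | x ∈ M ∧ x ∉ A ∧ ∀ y ∈ M, ¬ y < x } with hT
  refine ⟨⟨?_, ?_, ?_⟩, ?_⟩
  · intro x hx
    apply Set.indicator_of_notMem
    rintro ⟨_, hxA, _⟩; exact hxA hx
  · intro x _
    exact Set.indicator_nonneg (fun _ _ => zero_le_one) x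
  · rintro a b l ⟨haA, hbA, hlne, hlA, hchain⟩
    have hpw : List.Pairwise (· < ·) (a :: (l ++ [b])) :=
      List.isChain_iff_pairwise.mp hchain
    rcases List.pairwise_cons.mp hpw with ⟨hahd, htl⟩
    rcases List.pairwise_append.mp htl with ⟨hpl, _, hlb'⟩
    have hal : ∀ x ∈ l, a < x := fun x hx => hahd x (List.mem_append_left _ hx)
    have hlb : ∀ x ∈ l, x < b := fun x hx => hlb' x hx b (List.mem_singleton_self b)
    have hab : a < b := hahd b (List.mem_append_right _ (List.mem_singleton_self b))
    have hpT : l.Pairwise (fun x y => ¬(x ∈ T ∧ y ∈ T)) := by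
      refine hpl.imp ?_
      rintro x y hlt ⟨hxT, hyT⟩
      exact hyT.2.2 x hxT.1 hlt
    by_cases hex : ∃ x ∈ l, x ∈ T
    · obtain ⟨x₀, hx₀l, hx₀T⟩ := hex
      -- lam a = 0
      have haM : a ∉ M := fun haM => hx₀T.2.2 a haM (hal x₀ hx₀l)
      have hlama : lam a = 0 := by
        by_contra hne
        exact haM (hM ▸ Or.inr ⟨haA, hne⟩)
      -- s x₀ ≥ 1
      have hx₀A : x₀ ∉ A := hx₀T.2.1
      have hsx₀ne : s x₀ ≠ 0 := by
        have := hx₀T.1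
        rw [hM] at this
        rcases this with h | h
        · exact h.2
        · exact absurd h.1 hx₀A
      obtain ⟨n, hn⟩ := hsint x₀
      have h1 : (1:ℝ) ≤ s x₀ := by
        have hnn := hsnn x₀ hx₀A
        rw [hn] at hnn hsx₀ne ⊢
        have : (0:ℤ) < n := by exact_mod_cast lt_of_le_of_ne hnn (by simpa using (Ne.symm hsx₀ne))
        exact_mod_cast this
      -- chain inequality for s
      have hcs := hschain a b l ⟨haA, hbA, hlne, hlA, hchain⟩
      have hsum_ge : s x₀ ≤ (l.map s).sum :=
        List.single_le_sum (by
          intro z hz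
          obtain ⟨y, hy, rfl⟩ := List.mem_map.mp hz
          exact hsnn y (hlA y hy)) _ (List.mem_map.mpr ⟨x₀, hx₀l, rfl⟩)
      have hlamb : (1:ℤ) ≤ lam b := by
        have h2 : (1:ℝ) ≤ (lam b : ℝ) - (lam a : ℝ) := le_trans (le_trans h1 hsum_ge) hcs
        rw [hlama] at h2
        have h3 : (1:ℝ) ≤ (lam b : ℝ) := by push_cast at h2 ⊢; linarith
        exact_mod_cast h3
      have hminb : min (lam b) 1 = 1 := min_eq_right hlamb
      have hmina : min (lam a) 1 = 0 := by rw [hlama]; simp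
      show (l.map (T.indicator fun _ => (1:ℝ))).sum ≤ ((min (lam b) 1 : ℤ):ℝ) - ((min (lam a) 1 : ℤ):ℝ)
      rw [hminb, hmina]
      simpa using ind_sum_le_one T l hpT
    · have hsum0 : (l.map (Set.indicator T fun _ => (1:ℝ))).sum = 0 :=
        List.sum_eq_zero (by
          intro z hz'
          obtain ⟨y, hy, rfl⟩ := List.mem_map.mp hz'
          exact Set.indicator_of_notMem (fun hyT => hex ⟨y, hy, hyT⟩) _)
      rw [hsum0]
      have hmono : min (lam a) 1 ≤ min (lam b) 1 :=
        min_le_min (hlam.2 a haA b hbA hab) le_rfl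
      have : ((min (lam a) 1 : ℤ) : ℝ) ≤ ((min (lam b) 1 : ℤ) : ℝ) := by exact_mod_cast hmono
      linarith
  · intro x
    by_cases h : x ∈ T
    · exact ⟨1, by simp [Set.indicator_of_mem h]⟩
    · exact ⟨0, by simp [Set.indicator_of_notMem h]⟩
end

section
/- If the marking λ is strict on A (λ_a < λ_b for all a ≺ b in A) and P\A is nonempty with every element x ∈ P\A lying between some a, b ∈ A with λ_a < λ_b, then the marked order polytope O(P,A)_λ has nonempty interior in R^{P\A}, i.e., it is full-dimensional of dimension |P\A|. -/
open Pointwise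

variable {α : Type*}

theorem stmt19 [Fintype α] [PartialOrder α] (A : Set α) (lam : α → ℤ)
    (hA : ContainsExtremals A)
    (hstrict : ∀ a ∈ A, ∀ b ∈ A, a < b → lam a < lam b)
    (hne : ∃ x : α, x ∉ A)
    (hbetween : ∀ x, x ∉ A → ∃ a ∈ A, ∃ b ∈ A, a < x ∧ x < b ∧ lam a < lam b) :
    ∃ s ∈ markedOrderPolytope A lam, ∃ ε : ℝ, 0 < ε ∧
      ∀ t : α → ℝ, (∀ a ∈ A, t a = (lam a : ℝ)) →
        (∀ x, |t x - s x| < ε) → t ∈ markedOrderPolytope A lam := by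
  classical
  set n : ℕ := Fintype.card α with hn
  set δ : ℝ := 1 / (4 * (n + 1)) with hδdef
  have hδpos : 0 < δ := by positivity
  have hδsmall : δ ≤ 1 / 4 := by
    rw [hδdef, div_le_div_iff₀ (by positivity) (by norm_num)]
    nlinarith [Nat.cast_nonneg (α := ℝ) n]
  set mR : α → ℝ := fun x => sSup ((fun a => (lam a : ℝ)) '' {a | a ∈ A ∧ a < x}) with hmR
  set MR : α → ℝ := fun x => sInf ((fun b => (lam b : ℝ)) '' {b | b ∈ A ∧ x < b}) with hMR
  set r : α → ℝ := fun x => ((Finset.univ.filter (fun z => z ∉ A ∧ z ≤ x)).card : ℝ) with hr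
  set s : α → ℝ := fun x => if x ∈ A then (lam x : ℝ) else (mR x + MR x) / 2 + δ * r x with hs
  set ε : ℝ := δ / 2 with hε
  have hεpos : 0 < ε := by positivity
  have hεsmall : ε ≤ 1 / 8 := by rw [hε]; linarith
  have hne1 : ∀ x, x ∉ A → ((fun a => (lam a : ℝ)) '' {a | a ∈ A ∧ a < x}).Nonempty := by
    intro x hx
    obtain ⟨a, haA, b, hbA, hax, hxb, _⟩ := hbetween x hx
    exact ⟨_, ⟨a, ⟨haA, hax⟩, rfl⟩⟩
  have hne2 : ∀ x, x ∉ A → ((fun b => (lam b : ℝ)) '' {b | b ∈ A ∧ x < b}).Nonempty := by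
    intro x hx
    obtain ⟨a, haA, b, hbA, hax, hxb, _⟩ := hbetween x hx
    exact ⟨_, ⟨b, ⟨hbA, hxb⟩, rfl⟩⟩
  have hle_m : ∀ x, x ∉ A → ∀ a ∈ A, a < x → (lam a : ℝ) ≤ mR x := by
    intro x hx a haA hax
    exact le_csSup (Set.Finite.bddAbove (Set.toFinite _)) ⟨a, ⟨haA, hax⟩, rfl⟩
  have hM_le : ∀ x, x ∉ A → ∀ b ∈ A, x < b → MR x ≤ (lam b : ℝ) := by
    intro x hx b hbA hxb
    exact csInf_le (Set.Finite.bddBelow (Set.toFinite _)) ⟨b, ⟨hbA, hxb⟩, rfl⟩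
  have hgap : ∀ x, x ∉ A → mR x + 1 ≤ MR x := by
    intro x hx
    obtain ⟨a, ⟨haA, hax⟩, ha⟩ := Set.Nonempty.csSup_mem (hne1 x hx) (Set.toFinite _)
    obtain ⟨b, ⟨hbA, hxb⟩, hb⟩ := Set.Nonempty.csInf_mem (hne2 x hx) (Set.toFinite _)
    have hab : lam a < lam b := hstrict a haA b hbA (hax.trans hxb)
    have hab' : lam a + 1 ≤ lam b := hab
    have hab'' : (lam a : ℝ) + 1 ≤ (lam b : ℝ) := by exact_mod_cast hab'
    have hmx : mR x = (lam a : ℝ) := ha.symm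
    have hMx : MR x = (lam b : ℝ) := hb.symm
    rw [hmx, hMx]
    exact hab''
  have hm_mono : ∀ x y, x ∉ A → x < y → mR x ≤ mR y := by
    intro x y hx hxy
    refine csSup_le (hne1 x hx) ?_
    rintro v ⟨a, ⟨haA, hax⟩, rfl⟩
    exact le_csSup (Set.Finite.bddAbove (Set.toFinite _)) ⟨a, ⟨haA, hax.trans hxy⟩, rfl⟩
  have hM_mono : ∀ x y, y ∉ A → x < y → MR x ≤ MR y := by
    intro x y hy hxy
    refine le_csInf (hne2 y hy) ?_
    rintro v ⟨b, ⟨hbA, hyb⟩, rfl⟩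
    exact csInf_le (Set.Finite.bddBelow (Set.toFinite _)) ⟨b, ⟨hbA, hxy.trans hyb⟩, rfl⟩
  have hr_lt : ∀ x y, y ∉ A → x < y → r x + 1 ≤ r y := by
    intro x y hy hxy
    have hsub : (Finset.univ.filter (fun z => z ∉ A ∧ z ≤ x)) ⊂
        (Finset.univ.filter (fun z => z ∉ A ∧ z ≤ y)) := by
      refine Finset.ssubset_iff_of_subset ?_ |>.2 ?_
      · intro z hz
        simp only [Finset.mem_filter, Finset.mem_univ, true_and] at hz ⊢
        exact ⟨hz.1, hz.2.trans hxy.le⟩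
      · refine ⟨y, ?_, ?_⟩
        · simp only [Finset.mem_filter, Finset.mem_univ, true_and]
          exact ⟨hy, le_refl y⟩
        · simp only [Finset.mem_filter, Finset.mem_univ, true_and, not_and]
          intro _ hyx
          exact absurd (hyx.trans_lt hxy) (lt_irrefl y)
    have h := Finset.card_lt_card hsub
    have h2 : ((Finset.univ.filter (fun z => z ∉ A ∧ z ≤ x)).card : ℝ) + 1 ≤
        ((Finset.univ.filter (fun z => z ∉ A ∧ z ≤ y)).card : ℝ) := by exact_mod_cast h
    exact h2
  have hr_nonneg : ∀ x, 0 ≤ r x := by intro x; rw [hr]; positivity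
  have hr_le : ∀ x, r x ≤ n := by
    intro x
    have h2 : ((Finset.univ.filter (fun z => z ∉ A ∧ z ≤ x)).card : ℝ) ≤
        ((Fintype.card α : ℕ) : ℝ) := by exact_mod_cast Finset.card_le_univ _
    exact h2
  have hδr : ∀ x, δ * r x ≤ 1 / 4 := by
    intro x
    have h1 : δ * r x ≤ δ * (n + 1) := by
      have := hr_le x
      nlinarith [hr_nonneg x]
    have h2 : δ * ((n : ℝ) + 1) = 1 / 4 := by
      rw [hδdef]
      field_simp
    linarith
  have key : ∀ t : α → ℝ, (∀ a ∈ A, t a = (lam a : ℝ)) →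
      (∀ x, |t x - s x| < ε) → t ∈ markedOrderPolytope A lam := by
    intro t ht hcl
    refine ⟨ht, ?_, ?_, ?_⟩
    · intro x y hx hy hxy
      have h1 := abs_lt.1 (hcl x)
      have h2 := abs_lt.1 (hcl y)
      have hsx : s x = (mR x + MR x) / 2 + δ * r x := by rw [hs]; simp [hx]
      have hsy : s y = (mR y + MR y) / 2 + δ * r y := by rw [hs]; simp [hy]
      have := hm_mono x y hx hxy
      have := hM_mono x y hy hxy
      have := hr_lt x y hy hxy
      rw [hε] at h1 h2
      nlinarith
    · intro a haA x hx hax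
      have h1 := abs_lt.1 (hcl x)
      have hsx : s x = (mR x + MR x) / 2 + δ * r x := by rw [hs]; simp [hx]
      have := hle_m x hx a haA hax
      have := hgap x hx
      have := hr_nonneg x
      nlinarith
    · intro b hbA x hx hxb
      have h1 := abs_lt.1 (hcl x)
      have hsx : s x = (mR x + MR x) / 2 + δ * r x := by rw [hs]; simp [hx]
      have := hM_le x hx b hbA hxb
      have := hgap x hx
      have := hδr x
      nlinarith
  have hsA : ∀ a ∈ A, s a = (lam a : ℝ) := by
    intro a ha
    rw [hs]; simp [ha]
  refine ⟨s, key s hsA (fun x => by simpa using hεpos), ε, hεpos, key⟩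
end
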